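/- If σ ≤ τ in the normalisation pre-order, then there exists a finite hereditary identity Id such that ⊢ Id : σ → τ is derivable. -/
import Mathlib


namespace TypeIso

open Relation

/-- Untyped λ-terms with named variables. -/
inductive Term : Type
  | var : ℕ → Term
  | app : Term → Term → Term
  | lam : ℕ → Term → Term
deriving DecidableEq

namespace Term

/-- Free variables. -/
def fv : Term → Finset ℕ
  | var x => {x}
  | app M N => fv M ∪ fv N
  | lam x M => fv M \ {x}

/-- Substitution `M[N/x]` (naive; adequate for the linear terms considered). -/
def subst : Term → ℕ → Term → Term
  | var y, x, N => if y = x then N else var y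
  | app M₁ M₂, x, N => app (subst M₁ x N) (subst M₂ x N)
  | lam y M, x, N => if y = x then lam y M else lam y (subst M x N)

end Term

open Term

/-- One-step β-reduction. -/
inductive Beta : Term → Term → Prop
  | beta (x M N) : Beta (Term.app (Term.lam x M) N) (Term.subst M x N)
  | appL {M M'} (N) : Beta M M' → Beta (Term.app M N) (Term.app M' N)
  | appR (M) {N N'} : Beta N N' → Beta (Term.app M N) (Term.app M N')
  | lam (x) {M M'} : Beta M M' → Beta (Term.lam x M) (Term.lam x M')

/-- One-step η-reduction. -/
inductive Eta : Term → Term → Prop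
  | eta (x M) : x ∉ fv M → Eta (Term.lam x (Term.app M (Term.var x))) M
  | appL {M M'} (N) : Eta M M' → Eta (Term.app M N) (Term.app M' N)
  | appR (M) {N N'} : Eta N N' → Eta (Term.app M N) (Term.app M N')
  | lam (x) {M M'} : Eta M M' → Eta (Term.lam x M) (Term.lam x M')

def BetaStar : Term → Term → Prop := ReflTransGen Beta
def EtaStar : Term → Term → Prop := ReflTransGen Eta
/-- η-expansion: the converse of one-step η-reduction. -/
def EtaExp : Term → Term → Prop := fun a b => Eta b a
def EtaExpStar : Term → Term → Prop := ReflTransGen EtaExp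
def BetaConv : Term → Term → Prop := EqvGen Beta
def BetaEta : Term → Term → Prop := fun a b => Beta a b ∨ Eta a b
def BetaEtaConv : Term → Term → Prop := EqvGen BetaEta

def BetaEtaRed : Term → Term → Prop := ReflTransGen BetaEta

/-- `appList h [a₁,…,aₙ] = h a₁ … aₙ`. -/
def appList (h : Term) (args : List Term) : Term := args.foldl Term.app h
/-- `lamList [y₁,…,yₙ] M = λ y₁ … yₙ. M`. -/
def lamList (xs : List ℕ) (body : Term) : Term := xs.foldr Term.lam body

/-- β-normal finite hereditary permutators:
`λ x y₁ … yₙ. x (P₁ y_{π(1)}) … (Pₙ y_{π(n)})` with each `Pᵢ` an FHP. -/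
inductive FHPnf : Term → Prop
  | mk (x : ℕ) (ys : List ℕ) (Ps : List Term) (π : Equiv.Perm (Fin ys.length))
      (hlen : Ps.length = ys.length)
      (hx : x ∉ ys) (hnd : ys.Nodup)
      (hPs : ∀ P ∈ Ps, FHPnf P) :
      FHPnf (Term.lam x (lamList ys (appList (Term.var x)
        (List.ofFn fun i : Fin ys.length =>
          Term.app (Ps.get (Fin.cast hlen.symm i)) (Term.var (ys.get (π i)))))))

/-- Finite hereditary permutators (modulo β-conversion). -/
def FHP (M : Term) : Prop := ∃ N, BetaConv M N ∧ FHPnf N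

/-- β-normal finite hereditary identities:
`λ x y₁ … yₙ. x (Id₁ y₁) … (Idₙ yₙ)` with each `Idᵢ` an FHI. -/
inductive FHInf : Term → Prop
  | mk (x : ℕ) (ys : List ℕ) (Ids : List Term)
      (hlen : Ids.length = ys.length)
      (hx : x ∉ ys) (hnd : ys.Nodup)
      (hIds : ∀ P ∈ Ids, FHInf P) :
      FHInf (Term.lam x (lamList ys (appList (Term.var x)
        (List.ofFn fun i : Fin ys.length =>
          Term.app (Ids.get (Fin.cast hlen.symm i)) (Term.var (ys.get i))))))

/-- Finite hereditary identities (modulo β-conversion). -/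
def FHI (M : Term) : Prop := ∃ N, BetaConv M N ∧ FHInf N

/-- Types with atoms, ω, arrow, intersection and union. -/
inductive Ty : Type
  | atom : ℕ → Ty
  | omega : Ty
  | arr : Ty → Ty → Ty
  | and : Ty → Ty → Ty
  | or : Ty → Ty → Ty
deriving DecidableEq

/-- Semantic type equivalence `≅`: the least congruence with
`φ ≅ ω→φ`, `ω ≅ ω→ω`, `σ ≅ σ∧ω ≅ ω∧σ`, `ω ≅ σ∨ω ≅ ω∨σ`. -/
inductive SemEq : Ty → Ty → Prop
  | refl (σ) : SemEq σ σ
  | symm : SemEq σ τ → SemEq τ σ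
  | trans : SemEq σ τ → SemEq τ ρ → SemEq σ ρ
  | arr : SemEq σ σ' → SemEq τ τ' → SemEq (Ty.arr σ τ) (Ty.arr σ' τ')
  | and : SemEq σ σ' → SemEq τ τ' → SemEq (Ty.and σ τ) (Ty.and σ' τ')
  | or : SemEq σ σ' → SemEq τ τ' → SemEq (Ty.or σ τ) (Ty.or σ' τ')
  | atomFun (a) : SemEq (Ty.atom a) (Ty.arr Ty.omega (Ty.atom a))
  | omegaFun : SemEq Ty.omega (Ty.arr Ty.omega Ty.omega)
  | andOmegaR (σ) : SemEq σ (Ty.and σ Ty.omega)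
  | andOmegaL (σ) : SemEq σ (Ty.and Ty.omega σ)
  | orOmegaR (σ) : SemEq Ty.omega (Ty.or σ Ty.omega)
  | orOmegaL (σ) : SemEq Ty.omega (Ty.or Ty.omega σ)

/-- Relevant environments, considered up to permutation in the rules. -/
abbrev Env := List (ℕ × Ty)

def Env.dom (Γ : Env) : List ℕ := Γ.map Prod.fst

def EnvDisj (Γ₁ Γ₂ : Env) : Prop := ∀ x, x ∈ Γ₁.dom → x ∉ Γ₂.dom

/-- The intersection-union type assignment system for linear λ-terms (Figure 1). -/
inductive Deriv : Env → Term → Ty → Prop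
  | ax (x σ) : Deriv [(x, σ)] (Term.var x) σ
  | eqv {Γ M σ τ} : Deriv Γ M σ → SemEq σ τ → Deriv Γ M τ
  | perm {Γ Γ' M σ} : Deriv Γ M σ → Γ.Perm Γ' → Deriv Γ' M σ
  | arrI {Γ x σ M τ} : Deriv ((x, σ) :: Γ) M τ → Deriv Γ (Term.lam x M) (Ty.arr σ τ)
  | arrE {Γ₁ Γ₂ M N σ τ} : Deriv Γ₁ M (Ty.arr σ τ) → Deriv Γ₂ N σ → EnvDisj Γ₁ Γ₂ →
      Deriv (Γ₁ ++ Γ₂) (Term.app M N) τ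
  | andI {Γ M σ τ} : Deriv Γ M σ → Deriv Γ M τ → Deriv Γ M (Ty.and σ τ)
  | andE₁ {Γ M σ τ} : Deriv Γ M (Ty.and σ τ) → Deriv Γ M σ
  | andE₂ {Γ M σ τ} : Deriv Γ M (Ty.and σ τ) → Deriv Γ M τ
  | orI₁ {Γ M σ τ} : Deriv Γ M σ → Deriv Γ M (Ty.or σ τ)
  | orI₂ {Γ M σ τ} : Deriv Γ M σ → Deriv Γ M (Ty.or τ σ)
  | orE {Γ₁ Γ₂ x M N σ τ ζ ρ} :
      Deriv ((x, Ty.and σ ζ) :: Γ₁) M ρ →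
      Deriv ((x, Ty.and τ ζ) :: Γ₁) M ρ →
      Deriv Γ₂ N (Ty.and (Ty.or σ τ) ζ) → EnvDisj Γ₁ Γ₂ →
      Deriv (Γ₁ ++ Γ₂) (Term.subst M x N) ρ

/-- Linear λ-terms: every free or bound variable occurs exactly once. -/
inductive Linear : Term → Prop
  | var (x) : Linear (Term.var x)
  | app {M N} : Linear M → Linear N → Disjoint (fv M) (fv N) → Linear (Term.app M N)
  | lam {x M} : Linear M → x ∈ fv M → Linear (Term.lam x M)

/-- A variable fresh for a finite set. -/
def freshVar (s : Finset ℕ) : ℕ := (s.sup id) + 1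

/-- Composition `λx. P (Q x)` with a fresh `x`. -/
def tcomp (P Q : Term) : Term :=
  Term.lam (freshVar (fv P ∪ fv Q))
    (Term.app P (Term.app Q (Term.var (freshVar (fv P ∪ fv Q)))))

/-- `P` and `Q` are inverse of each other: both compositions are βη-equal to the identity. -/
def InvPair (P Q : Term) : Prop :=
  ∃ x, BetaEtaConv (tcomp P Q) (Term.lam x (Term.var x)) ∧
       BetaEtaConv (tcomp Q P) (Term.lam x (Term.var x))

/-- Type isomorphism `σ ≈ τ`. -/
def TyIso (σ τ : Ty) : Prop :=
  ∃ P Q, FHP P ∧ FHP Q ∧ InvPair P Q ∧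
    Deriv [] P (Ty.arr σ τ) ∧ Deriv [] Q (Ty.arr τ σ)

/-- Strong type isomorphism `σ ≈ₛ τ`: proved by a finite hereditary identity. -/
def StrongIso (σ τ : Ty) : Prop :=
  ∃ Id, FHI Id ∧ Deriv [] Id (Ty.arr σ τ) ∧ Deriv [] Id (Ty.arr τ σ)

/-- The normalisation pre-order `≤` on types. -/
inductive NormLe : Ty → Ty → Prop
  | refl (σ) : NormLe σ σ
  | trans {σ τ ρ} : NormLe σ τ → NormLe τ ρ → NormLe σ ρ
  | leOmega (σ) : NormLe σ Ty.omega
  | andE₁ (σ τ) : NormLe (Ty.and σ τ) σ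
  | andE₂ (σ τ) : NormLe (Ty.and σ τ) τ
  | orI₁ (σ τ) : NormLe σ (Ty.or σ τ)
  | orI₂ (σ τ) : NormLe τ (Ty.or σ τ)
  | andI {σ τ ρ} : NormLe σ τ → NormLe σ ρ → NormLe σ (Ty.and τ ρ)
  | orE {σ τ ρ} : NormLe σ τ → NormLe ρ τ → NormLe (Ty.or σ ρ) τ
  | atomArr (a σ) : NormLe (Ty.atom a) (Ty.arr σ (Ty.atom a))
  | omegaArr (σ) : NormLe Ty.omega (Ty.arr σ Ty.omega)
  | arr {σ σ' τ τ'} : NormLe σ' σ → NormLe τ τ' → NormLe (Ty.arr σ τ) (Ty.arr σ' τ')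

/-- Inner type normalisation rules `σ ⇝ τ`. -/
inductive InnerStep : Ty → Ty → Prop
  | atomRule (a) : InnerStep (Ty.arr Ty.omega (Ty.atom a)) (Ty.atom a)
  | omegaRule {σ} : NormLe Ty.omega σ → σ ≠ Ty.omega → InnerStep σ Ty.omega
  | distArrAnd (σ τ ρ) :
      InnerStep (Ty.arr σ (Ty.and τ ρ)) (Ty.and (Ty.arr σ τ) (Ty.arr σ ρ))
  | distAndArr (σ τ ρ ζ) :
      InnerStep (Ty.arr (Ty.and (Ty.or σ τ) ρ) ζ)
                (Ty.arr (Ty.or (Ty.and σ ρ) (Ty.and τ ρ)) ζ)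
  | distOrArr (σ τ ρ) :
      InnerStep (Ty.arr (Ty.or σ τ) ρ) (Ty.and (Ty.arr σ ρ) (Ty.arr τ ρ))
  | distArrOr (σ τ ρ ζ) :
      InnerStep (Ty.arr σ (Ty.or (Ty.and τ ρ) ζ))
                (Ty.arr σ (Ty.and (Ty.or τ ζ) (Ty.or ρ ζ)))
  | eraseAnd {σ τ} : NormLe σ τ → InnerStep (Ty.and σ τ) σ
  | eraseOr {σ τ} : NormLe σ τ → InnerStep (Ty.or σ τ) τ

/-- Type contexts. -/
inductive TyCtx : Type
  | hole : TyCtx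
  | arrL : TyCtx → Ty → TyCtx
  | arrR : Ty → TyCtx → TyCtx
  | andL : TyCtx → Ty → TyCtx
  | andR : Ty → TyCtx → TyCtx
  | orL : TyCtx → Ty → TyCtx
  | orR : Ty → TyCtx → TyCtx

/-- Filling the hole of a type context. -/
def TyCtx.fill : TyCtx → Ty → Ty
  | TyCtx.hole, τ => τ
  | TyCtx.arrL C σ, τ => Ty.arr (C.fill τ) σ
  | TyCtx.arrR σ C, τ => Ty.arr σ (C.fill τ)
  | TyCtx.andL C σ, τ => Ty.and (C.fill τ) σ
  | TyCtx.andR σ C, τ => Ty.and σ (C.fill τ)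
  | TyCtx.orL C σ, τ => Ty.or (C.fill τ) σ
  | TyCtx.orR σ C, τ => Ty.or σ (C.fill τ)

/-- Top normalisation rules `σ ⟹ τ`: contextual closure of the inner rules,
plus `(σ∧τ)∨ρ ⟹ (σ∨ρ)∧(τ∨ρ)` at the top or in right-hand sides of arrows. -/
inductive TopStep : Ty → Ty → Prop
  | ctx {σ τ} (C : TyCtx) : InnerStep σ τ → TopStep (C.fill σ) (C.fill τ)
  | dist (σ τ ρ) :
      TopStep (Ty.or (Ty.and σ τ) ρ) (Ty.and (Ty.or σ ρ) (Ty.or τ ρ))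
  | arrR {τ τ'} (σ) : TopStep τ τ' → TopStep (Ty.arr σ τ) (Ty.arr σ τ')

open Classical in
/-- The normal form of a type w.r.t. the top normalisation rules. -/
noncomputable def nf (σ : Ty) : Ty :=
  if h : ∃ ν, Relation.ReflTransGen TopStep σ ν ∧ ∀ ρ, ¬ TopStep ν ρ then h.choose else σ

/-- `mkArrow [ξ₁,…,ξₙ] μ = ξ₁ → … → ξₙ → μ`. -/
def mkArrow (args : List Ty) (res : Ty) : Ty := args.foldr Ty.arr res

/-- Similarity between sequences of normal types. -/
inductive TySim : List Ty → List Ty → Prop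
  | refl (l) : TySim l l
  | symm {l r} : TySim l r → TySim r l
  | trans {l r s} : TySim l r → TySim r s → TySim l s
  | mergeAnd (l₁ l₂ r₁ r₂ : List Ty) (η₁ η₂ θ₁ θ₂ : Ty) :
      l₁.length = r₁.length →
      TySim (l₁ ++ η₁ :: η₂ :: l₂) (r₁ ++ θ₁ :: θ₂ :: r₂) →
      TySim (l₁ ++ nf (Ty.and η₁ η₂) :: l₂) (r₁ ++ nf (Ty.and θ₁ θ₂) :: r₂)
  | mergeOr (l₁ l₂ r₁ r₂ : List Ty) (η₁ η₂ θ₁ θ₂ : Ty) :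
      l₁.length = r₁.length →
      TySim (l₁ ++ η₁ :: η₂ :: l₂) (r₁ ++ θ₁ :: θ₂ :: r₂) →
      TySim (l₁ ++ nf (Ty.or η₁ η₂) :: l₂) (r₁ ++ nf (Ty.or θ₁ θ₂) :: r₂)
  | arrow (m n : ℕ) (ξ χ : Fin n → Fin m → Ty) (μ ν : Fin m → Ty)
      (π : Equiv.Perm (Fin n)) :
      (∀ i, TySim (List.ofFn (ξ i)) (List.ofFn (χ i))) →
      TySim (List.ofFn μ) (List.ofFn ν) →
      TySim (List.ofFn fun j => nf (mkArrow (List.ofFn fun i => ξ i j) (μ j)))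
            (List.ofFn fun j => nf (mkArrow (List.ofFn fun i => χ (π i) j) (ν j)))


/-! ### Auxiliary development for `normLe_fhi_typed` -/

/-- Expansion trees: `cons c r` means "one more argument, expanded by `c`,
followed by the rest `r`". -/
inductive Tr : Type
  | leaf : Tr
  | cons : Tr → Tr → Tr

namespace AuxFHI

open Term

/-- Weight of a tree: number of `cons` nodes (= number of bound variables used). -/
def tw : Tr → ℕ
  | .leaf => 0
  | .cons c r => 1 + tw c + tw r

/-- The η-expansion of a term `M` along a tree, using bound variables `n, n+1, …`. -/
def texpand : Tr → Term → ℕ → Term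
  | .leaf, M, _ => M
  | .cons c r, M, n =>
      Term.lam n (texpand r (Term.app M (texpand c (Term.var n) (n + 1))) (n + 1 + tw c))

lemma subst_texpand (T : Tr) (N : Term) (n z : ℕ) (M : Term)
    (hz : z < n ∨ n + tw T ≤ z) :
    Term.subst (texpand T N n) z M = texpand T (Term.subst N z M) n := by
  induction T generalizing N n with
  | leaf => rfl
  | cons c r ihc ihr =>
    have h1 : (1 : ℕ) + tw c + tw r = tw (Tr.cons c r) := rfl
    simp only [tw] at hz
    have hne : n ≠ z := by omega
    simp only [texpand, Term.subst, if_neg hne]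
    rw [ihr _ _ (by omega)]
    simp only [Term.subst]
    rw [ihc _ _ (by omega)]
    simp [Term.subst, hne]

/-- Condition that all domain variables of `Γ` avoid the interval `[n, n+k)`. -/
def DomOK (Γ : Env) (n k : ℕ) : Prop := ∀ x ∈ Env.dom Γ, x < n ∨ n + k ≤ x

lemma dom_cons (x : ℕ) (σ : Ty) (Γ : Env) :
    Env.dom ((x, σ) :: Γ) = x :: Env.dom Γ := rfl

lemma derOmega {Γ : Env} {M : Term} {σ : Ty} (h : Deriv Γ M σ) : Deriv Γ M Ty.omega :=
  Deriv.andE₂ (Deriv.eqv h (SemEq.andOmegaR σ))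

lemma envDisj_nil (Γ : Env) : EnvDisj [] Γ := by
  intro x hx
  simp [Env.dom] at hx

lemma envDisj_single {Γ : Env} {y : ℕ} (σ : Ty) (h : ∀ x ∈ Env.dom Γ, x ≠ y) :
    EnvDisj Γ [(y, σ)] := by
  intro x hx
  simp [Env.dom]
  exact h x hx

lemma perm_snoc {Γ : Env} {y : ℕ} {σ : Ty} :
    (Γ ++ [(y, σ)]).Perm ((y, σ) :: Γ) := by
  simpa using List.perm_append_comm (l₁ := Γ) (l₂ := [(y, σ)])

/-- Size measure on types making `ω` smallest. -/
def tsize : Ty → ℕ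
  | .omega => 0
  | .atom _ => 1
  | .arr a b => 1 + tsize a + tsize b
  | .and a b => 1 + tsize a + tsize b
  | .or a b => 1 + tsize a + tsize b

/-- **Master lemma**: every tree expansion preserves every derivable type. -/
theorem master : ∀ (σ : Ty) (T : Tr) (Γ : Env) (M : Term) (n : ℕ),
    Deriv Γ M σ → DomOK Γ n (tw T) → Deriv Γ (texpand T M n) σ
  | _, .leaf, _, _, _, hM, _ => hM
  | .and σ₁ σ₂, T, Γ, M, n, hM, hd =>
      Deriv.andI (master σ₁ T Γ M n (Deriv.andE₁ hM) hd)
        (master σ₂ T Γ M n (Deriv.andE₂ hM) hd)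
  | .or σ₁ σ₂, T, Γ, M, n, hM, hd => by
      set z := n + tw T with hz
      have hdz : DomOK [(z, Ty.and σ₁ Ty.omega)] n (tw T) := by
        intro x hx
        simp [Env.dom] at hx
        omega
      have hdz₂ : DomOK [(z, Ty.and σ₂ Ty.omega)] n (tw T) := by
        intro x hx
        simp [Env.dom] at hx
        omega
      have p₁ : Deriv [(z, Ty.and σ₁ Ty.omega)] (texpand T (Term.var z) n) (Ty.or σ₁ σ₂) :=
        Deriv.orI₁ (master σ₁ T _ _ n (Deriv.andE₁ (Deriv.ax z (Ty.and σ₁ Ty.omega))) hdz)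
      have p₂ : Deriv [(z, Ty.and σ₂ Ty.omega)] (texpand T (Term.var z) n) (Ty.or σ₁ σ₂) :=
        Deriv.orI₂ (master σ₂ T _ _ n (Deriv.andE₁ (Deriv.ax z (Ty.and σ₂ Ty.omega))) hdz₂)
      have p₃ : Deriv Γ M (Ty.and (Ty.or σ₁ σ₂) Ty.omega) :=
        Deriv.eqv hM (SemEq.andOmegaR _)
      have hres := Deriv.orE (Γ₁ := []) p₁ p₂ p₃ (envDisj_nil Γ)
      have hsub : Term.subst (texpand T (Term.var z) n) z M = texpand T M n := by
        rw [subst_texpand T _ n z M (Or.inr (le_of_eq hz.symm))]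
        simp [Term.subst]
      rw [hsub] at hres
      simpa using hres
  | .atom a, .cons c r, Γ, M, n, hM, hd => by
      have hd' : DomOK [(n, Ty.omega)] (n + 1) (tw c) := by
        intro x hx; simp [Env.dom] at hx; omega
      have hEc : Deriv [(n, Ty.omega)] (texpand c (Term.var n) (n + 1)) Ty.omega :=
        master Ty.omega c _ _ (n + 1) (Deriv.ax n Ty.omega) hd'
      have hMarr : Deriv Γ M (Ty.arr Ty.omega (Ty.atom a)) := Deriv.eqv hM (SemEq.atomFun a)
      have hdisj : EnvDisj Γ [(n, Ty.omega)] := by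
        refine envDisj_single _ fun x hx => ?_
        have := hd x hx
        simp [tw] at this
        omega
      have happ := Deriv.perm (Deriv.arrE hMarr hEc hdisj) perm_snoc
      have hdr : DomOK ((n, Ty.omega) :: Γ) (n + 1 + tw c) (tw r) := by
        intro x hx
        rw [dom_cons] at hx
        simp at hx
        rcases hx with rfl | hx
        · omega
        · have := hd x hx; simp [tw] at this; omega
      have hr := master (Ty.atom a) r _ _ (n + 1 + tw c) happ hdr
      exact Deriv.eqv (Deriv.arrI hr) (SemEq.symm (SemEq.atomFun a))
  | .omega, .cons c r, Γ, M, n, hM, hd => by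
      have hd' : DomOK [(n, Ty.omega)] (n + 1) (tw c) := by
        intro x hx; simp [Env.dom] at hx; omega
      have hEc : Deriv [(n, Ty.omega)] (texpand c (Term.var n) (n + 1)) Ty.omega :=
        master Ty.omega c _ _ (n + 1) (Deriv.ax n Ty.omega) hd'
      have hMarr : Deriv Γ M (Ty.arr Ty.omega Ty.omega) := Deriv.eqv hM SemEq.omegaFun
      have hdisj : EnvDisj Γ [(n, Ty.omega)] := by
        refine envDisj_single _ fun x hx => ?_
        have := hd x hx
        simp [tw] at this
        omega
      have happ := Deriv.perm (Deriv.arrE hMarr hEc hdisj) perm_snoc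
      have hdr : DomOK ((n, Ty.omega) :: Γ) (n + 1 + tw c) (tw r) := by
        intro x hx
        rw [dom_cons] at hx
        simp at hx
        rcases hx with rfl | hx
        · omega
        · have := hd x hx; simp [tw] at this; omega
      have hr := master Ty.omega r _ _ (n + 1 + tw c) happ hdr
      exact Deriv.eqv (Deriv.arrI hr) (SemEq.symm SemEq.omegaFun)
  | .arr σ₁ σ₂, .cons c r, Γ, M, n, hM, hd => by
      have hd' : DomOK [(n, σ₁)] (n + 1) (tw c) := by
        intro x hx; simp [Env.dom] at hx; omega
      have hEc : Deriv [(n, σ₁)] (texpand c (Term.var n) (n + 1)) σ₁ :=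
        master σ₁ c _ _ (n + 1) (Deriv.ax n σ₁) hd'
      have hdisj : EnvDisj Γ [(n, σ₁)] := by
        refine envDisj_single _ fun x hx => ?_
        have := hd x hx
        simp [tw] at this
        omega
      have happ := Deriv.perm (Deriv.arrE hM hEc hdisj) perm_snoc
      have hdr : DomOK ((n, σ₁) :: Γ) (n + 1 + tw c) (tw r) := by
        intro x hx
        rw [dom_cons] at hx
        simp at hx
        rcases hx with rfl | hx
        · omega
        · have := hd x hx; simp [tw] at this; omega
      have hr := master σ₂ r _ _ (n + 1 + tw c) happ hdr
      exact Deriv.arrI hr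
  termination_by σ T => (tsize σ, tw T)
  decreasing_by
    all_goals first
      | exact Prod.Lex.left _ _ (by simp only [tsize]; omega)
      | exact Prod.Lex.right _ (by simp only [tw]; omega)

/-! ### A cut-free presentation of the normalisation pre-order -/

/-- Cut-free subtyping calculus. -/
inductive CF : Ty → Ty → Prop
  | refl (σ) : CF σ σ
  | omegaR (σ) : CF σ Ty.omega
  | andL₁ {σ ρ} (τ) : CF σ ρ → CF (Ty.and σ τ) ρ
  | andL₂ {τ ρ} (σ) : CF τ ρ → CF (Ty.and σ τ) ρ
  | andR {σ τ ρ} : CF σ τ → CF σ ρ → CF σ (Ty.and τ ρ)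
  | orR₁ {σ τ} (ρ) : CF σ τ → CF σ (Ty.or τ ρ)
  | orR₂ {σ ρ} (τ) : CF σ ρ → CF σ (Ty.or τ ρ)
  | orL {σ τ ρ} : CF σ ρ → CF τ ρ → CF (Ty.or σ τ) ρ
  | arr {σ σ' τ τ'} : CF σ' σ → CF τ τ' → CF (Ty.arr σ τ) (Ty.arr σ' τ')
  | atomArrR {a τ} (σ) : CF (Ty.atom a) τ → CF (Ty.atom a) (Ty.arr σ τ)
  | arrOmegaR {τ} (σ σ') : CF Ty.omega τ → CF σ (Ty.arr σ' τ)

lemma cf_omega_left {β γ : Ty} (h : CF β γ) : β = Ty.omega → ∀ α, CF α γ := by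
  induction h with
  | refl σ => intro hσ α; subst hσ; exact CF.omegaR α
  | omegaR σ => intro _ α; exact CF.omegaR α
  | andL₁ τ h ih => intro hc; simp at hc
  | andL₂ σ h ih => intro hc; simp at hc
  | andR h₁ h₂ ih₁ ih₂ => intro hc α; exact CF.andR (ih₁ hc α) (ih₂ hc α)
  | orR₁ ρ h ih => intro hc α; exact CF.orR₁ ρ (ih hc α)
  | orR₂ τ h ih => intro hc α; exact CF.orR₂ τ (ih hc α)
  | orL h₁ h₂ ih₁ ih₂ => intro hc; simp at hc
  | arr h₁ h₂ ih₁ ih₂ => intro hc; simp at hc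
  | atomArrR σ h ih => intro hc; simp at hc
  | arrOmegaR σ σ' h => intro _ α; exact CF.arrOmegaR α σ' h

lemma cf_and_right_inv {α γ : Ty} (h : CF α γ) :
    ∀ {β₁ β₂ : Ty}, γ = Ty.and β₁ β₂ → CF α β₁ ∧ CF α β₂ := by
  induction h with
  | refl σ => intro β₁ β₂ hσ; subst hσ
              exact ⟨CF.andL₁ β₂ (CF.refl β₁), CF.andL₂ β₁ (CF.refl β₂)⟩
  | omegaR σ => intro β₁ β₂ hc; simp at hc
  | andL₁ τ h ih => intro β₁ β₂ hc
                    exact ⟨CF.andL₁ τ (ih hc).1, CF.andL₁ τ (ih hc).2⟩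
  | andL₂ σ h ih => intro β₁ β₂ hc
                    exact ⟨CF.andL₂ σ (ih hc).1, CF.andL₂ σ (ih hc).2⟩
  | andR h₁ h₂ ih₁ ih₂ => intro β₁ β₂ hc; cases hc; exact ⟨h₁, h₂⟩
  | orR₁ ρ h ih => intro β₁ β₂ hc; simp at hc
  | orR₂ τ h ih => intro β₁ β₂ hc; simp at hc
  | orL h₁ h₂ ih₁ ih₂ => intro β₁ β₂ hc
                         exact ⟨CF.orL (ih₁ hc).1 (ih₂ hc).1, CF.orL (ih₁ hc).2 (ih₂ hc).2⟩
  | arr h₁ h₂ ih₁ ih₂ => intro β₁ β₂ hc; simp at hc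
  | atomArrR σ h ih => intro β₁ β₂ hc; simp at hc
  | arrOmegaR σ σ' h => intro β₁ β₂ hc; simp at hc

lemma cf_or_split {α δ : Ty} (h : CF α δ) :
    ∀ {β₁ β₂ γ : Ty}, δ = Ty.or β₁ β₂ →
      (∀ α', CF α' β₁ → CF α' γ) → (∀ α', CF α' β₂ → CF α' γ) → CF α γ := by
  induction h with
  | refl σ => intro β₁ β₂ γ hσ c₁ c₂; subst hσ
              exact CF.orL (c₁ β₁ (CF.refl β₁)) (c₂ β₂ (CF.refl β₂))
  | omegaR σ => intro β₁ β₂ γ hc; simp at hc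
  | andL₁ τ h ih => intro β₁ β₂ γ hc c₁ c₂; exact CF.andL₁ τ (ih hc c₁ c₂)
  | andL₂ σ h ih => intro β₁ β₂ γ hc c₁ c₂; exact CF.andL₂ σ (ih hc c₁ c₂)
  | andR h₁ h₂ ih₁ ih₂ => intro β₁ β₂ γ hc; simp at hc
  | orR₁ ρ h ih => intro β₁ β₂ γ hc c₁ c₂
                   cases hc; exact c₁ _ h
  | orR₂ τ h ih => intro β₁ β₂ γ hc c₁ c₂
                   cases hc; exact c₂ _ h
  | orL h₁ h₂ ih₁ ih₂ => intro β₁ β₂ γ hc c₁ c₂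
                         exact CF.orL (ih₁ hc c₁ c₂) (ih₂ hc c₁ c₂)
  | arr h₁ h₂ ih₁ ih₂ => intro β₁ β₂ γ hc; simp at hc
  | atomArrR σ h ih => intro β₁ β₂ γ hc; simp at hc
  | arrOmegaR σ σ' h => intro β₁ β₂ γ hc; simp at hc

lemma cf_arr_split {α δ : Ty} (h : CF α δ) :
    ∀ {β₁ β₂ σ' τ' : Ty}, δ = Ty.arr β₁ β₂ →
      (∀ y, CF β₁ y → CF σ' y) → (∀ x, CF x β₂ → CF x τ') → CF α (Ty.arr σ' τ') := by
  induction h with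
  | refl σ => intro β₁ β₂ σ' τ' hσ c₁ c₂; subst hσ
              exact CF.arr (c₁ β₁ (CF.refl β₁)) (c₂ β₂ (CF.refl β₂))
  | omegaR σ => intro β₁ β₂ σ' τ' hc; simp at hc
  | andL₁ τ h ih => intro β₁ β₂ σ' τ' hc c₁ c₂; exact CF.andL₁ τ (ih hc c₁ c₂)
  | andL₂ σ h ih => intro β₁ β₂ σ' τ' hc c₁ c₂; exact CF.andL₂ σ (ih hc c₁ c₂)
  | andR h₁ h₂ ih₁ ih₂ => intro β₁ β₂ σ' τ' hc; simp at hc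
  | orR₁ ρ h ih => intro β₁ β₂ σ' τ' hc; simp at hc
  | orR₂ τ h ih => intro β₁ β₂ σ' τ' hc; simp at hc
  | orL h₁ h₂ ih₁ ih₂ => intro β₁ β₂ σ' τ' hc c₁ c₂
                         exact CF.orL (ih₁ hc c₁ c₂) (ih₂ hc c₁ c₂)
  | arr h₁ h₂ ih₁ ih₂ => intro β₁ β₂ σ' τ' hc c₁ c₂
                         cases hc
                         exact CF.arr (c₁ _ h₁) (c₂ _ h₂)
  | atomArrR σ h ih => intro β₁ β₂ σ' τ' hc c₁ c₂
                       cases hc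
                       exact CF.atomArrR σ' (c₂ _ h)
  | arrOmegaR σ σ'' h => intro β₁ β₂ σ' τ' hc c₁ c₂
                         cases hc
                         exact CF.arrOmegaR σ σ' (c₂ _ h)

lemma cf_atom_left {α δ : Ty} (h : CF α δ) :
    ∀ {a : ℕ} {γ : Ty}, δ = Ty.atom a → CF (Ty.atom a) γ → CF α γ := by
  induction h with
  | refl σ => intro a γ hσ h₂; subst hσ; exact h₂
  | omegaR σ => intro a γ hc; simp at hc
  | andL₁ τ h ih => intro a γ hc h₂; exact CF.andL₁ τ (ih hc h₂)
  | andL₂ σ h ih => intro a γ hc h₂; exact CF.andL₂ σ (ih hc h₂)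
  | andR h₁ h₂ ih₁ ih₂ => intro a γ hc; simp at hc
  | orR₁ ρ h ih => intro a γ hc; simp at hc
  | orR₂ τ h ih => intro a γ hc; simp at hc
  | orL h₁ h₂ ih₁ ih₂ => intro a γ hc h₂; exact CF.orL (ih₁ hc h₂) (ih₂ hc h₂)
  | arr h₁ h₂ ih₁ ih₂ => intro a γ hc; simp at hc
  | atomArrR σ h ih => intro a γ hc; simp at hc
  | arrOmegaR σ σ' h => intro a γ hc; simp at hc

lemma cf_cut_and {δ γ : Ty} (h₂ : CF δ γ) :
    ∀ {β₁ β₂ α : Ty}, δ = Ty.and β₁ β₂ →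
      (∀ x y, CF x β₁ → CF β₁ y → CF x y) →
      (∀ x y, CF x β₂ → CF β₂ y → CF x y) →
      CF α (Ty.and β₁ β₂) → CF α γ := by
  induction h₂ with
  | refl σ => intro β₁ β₂ α hσ c₁ c₂ h₁; subst hσ; exact h₁
  | omegaR σ => intro β₁ β₂ α _ _ _ _; exact CF.omegaR α
  | andL₁ τ h ih => intro β₁ β₂ α hc c₁ c₂ h₁
                    cases hc
                    exact c₁ α _ (cf_and_right_inv h₁ rfl).1 h
  | andL₂ σ h ih => intro β₁ β₂ α hc c₁ c₂ h₁
                    cases hc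
                    exact c₂ α _ (cf_and_right_inv h₁ rfl).2 h
  | andR h₁' h₂' ih₁ ih₂ => intro β₁ β₂ α hc c₁ c₂ h₁
                            exact CF.andR (ih₁ hc c₁ c₂ h₁) (ih₂ hc c₁ c₂ h₁)
  | orR₁ ρ h ih => intro β₁ β₂ α hc c₁ c₂ h₁; exact CF.orR₁ ρ (ih hc c₁ c₂ h₁)
  | orR₂ τ h ih => intro β₁ β₂ α hc c₁ c₂ h₁; exact CF.orR₂ τ (ih hc c₁ c₂ h₁)
  | orL h₁' h₂' ih₁ ih₂ => intro β₁ β₂ α hc; simp at hc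
  | arr h₁' h₂' ih₁ ih₂ => intro β₁ β₂ α hc; simp at hc
  | atomArrR σ h ih => intro β₁ β₂ α hc; simp at hc
  | arrOmegaR σ σ' h => intro β₁ β₂ α _ _ _ _; exact CF.arrOmegaR α σ' h

lemma cf_cut_or {δ γ : Ty} (h₂ : CF δ γ) :
    ∀ {β₁ β₂ α : Ty}, δ = Ty.or β₁ β₂ →
      (∀ x y, CF x β₁ → CF β₁ y → CF x y) →
      (∀ x y, CF x β₂ → CF β₂ y → CF x y) →
      CF α (Ty.or β₁ β₂) → CF α γ := by
  induction h₂ with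
  | refl σ => intro β₁ β₂ α hσ c₁ c₂ h₁; subst hσ; exact h₁
  | omegaR σ => intro β₁ β₂ α _ _ _ _; exact CF.omegaR α
  | andL₁ τ h ih => intro β₁ β₂ α hc; simp at hc
  | andL₂ σ h ih => intro β₁ β₂ α hc; simp at hc
  | andR h₁' h₂' ih₁ ih₂ => intro β₁ β₂ α hc c₁ c₂ h₁
                            exact CF.andR (ih₁ hc c₁ c₂ h₁) (ih₂ hc c₁ c₂ h₁)
  | orR₁ ρ h ih => intro β₁ β₂ α hc c₁ c₂ h₁; exact CF.orR₁ ρ (ih hc c₁ c₂ h₁)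
  | orR₂ τ h ih => intro β₁ β₂ α hc c₁ c₂ h₁; exact CF.orR₂ τ (ih hc c₁ c₂ h₁)
  | orL hp₁ hp₂ ih₁ ih₂ => intro β₁ β₂ α hc c₁ c₂ h₁
                           cases hc
                           exact cf_or_split h₁ rfl (fun α' h => c₁ α' _ h hp₁)
                             (fun α' h => c₂ α' _ h hp₂)
  | arr h₁' h₂' ih₁ ih₂ => intro β₁ β₂ α hc; simp at hc
  | atomArrR σ h ih => intro β₁ β₂ α hc; simp at hc
  | arrOmegaR σ σ' h => intro β₁ β₂ α _ _ _ _; exact CF.arrOmegaR α σ' h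

lemma cf_cut_arr {δ γ : Ty} (h₂ : CF δ γ) :
    ∀ {β₁ β₂ α : Ty}, δ = Ty.arr β₁ β₂ →
      (∀ x y, CF x β₁ → CF β₁ y → CF x y) →
      (∀ x y, CF x β₂ → CF β₂ y → CF x y) →
      CF α (Ty.arr β₁ β₂) → CF α γ := by
  induction h₂ with
  | refl σ => intro β₁ β₂ α hσ c₁ c₂ h₁; subst hσ; exact h₁
  | omegaR σ => intro β₁ β₂ α _ _ _ _; exact CF.omegaR α
  | andL₁ τ h ih => intro β₁ β₂ α hc; simp at hc
  | andL₂ σ h ih => intro β₁ β₂ α hc; simp at hc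
  | andR h₁' h₂' ih₁ ih₂ => intro β₁ β₂ α hc c₁ c₂ h₁
                            exact CF.andR (ih₁ hc c₁ c₂ h₁) (ih₂ hc c₁ c₂ h₁)
  | orR₁ ρ h ih => intro β₁ β₂ α hc c₁ c₂ h₁; exact CF.orR₁ ρ (ih hc c₁ c₂ h₁)
  | orR₂ τ h ih => intro β₁ β₂ α hc c₁ c₂ h₁; exact CF.orR₂ τ (ih hc c₁ c₂ h₁)
  | orL h₁' h₂' ih₁ ih₂ => intro β₁ β₂ α hc; simp at hc
  | arr hp₁ hp₂ ih₁ ih₂ => intro β₁ β₂ α hc c₁ c₂ h₁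
                           cases hc
                           exact cf_arr_split h₁ rfl (fun y h => c₁ _ y hp₁ h)
                             (fun x h => c₂ x _ h hp₂)
  | atomArrR σ h ih => intro β₁ β₂ α hc; simp at hc
  | arrOmegaR σ σ' h => intro β₁ β₂ α _ _ _ _; exact CF.arrOmegaR α σ' h

/-- Cut admissibility for `CF`. -/
theorem cf_cut : ∀ (β α γ : Ty), CF α β → CF β γ → CF α γ := by
  intro β
  induction β with
  | atom a => intro α γ h₁ h₂; exact cf_atom_left h₁ rfl h₂
  | omega => intro α γ _ h₂; exact cf_omega_left h₂ rfl α
  | arr β₁ β₂ ih₁ ih₂ =>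
      intro α γ h₁ h₂
      exact cf_cut_arr h₂ rfl (fun x y => ih₁ x y) (fun x y => ih₂ x y) h₁
  | and β₁ β₂ ih₁ ih₂ =>
      intro α γ h₁ h₂
      exact cf_cut_and h₂ rfl (fun x y => ih₁ x y) (fun x y => ih₂ x y) h₁
  | or β₁ β₂ ih₁ ih₂ =>
      intro α γ h₁ h₂
      exact cf_cut_or h₂ rfl (fun x y => ih₁ x y) (fun x y => ih₂ x y) h₁

theorem normle_cf {σ τ : Ty} (h : NormLe σ τ) : CF σ τ := by
  induction h with
  | refl σ => exact CF.refl σ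
  | trans h₁ h₂ ih₁ ih₂ => exact cf_cut _ _ _ ih₁ ih₂
  | leOmega σ => exact CF.omegaR σ
  | andE₁ σ τ => exact CF.andL₁ τ (CF.refl σ)
  | andE₂ σ τ => exact CF.andL₂ σ (CF.refl τ)
  | orI₁ σ τ => exact CF.orR₁ τ (CF.refl σ)
  | orI₂ σ τ => exact CF.orR₂ σ (CF.refl τ)
  | andI h₁ h₂ ih₁ ih₂ => exact CF.andR ih₁ ih₂
  | orE h₁ h₂ ih₁ ih₂ => exact CF.orL ih₁ ih₂
  | atomArr a σ => exact CF.atomArrR σ (CF.refl (Ty.atom a))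
  | omegaArr σ => exact CF.arrOmegaR Ty.omega σ (CF.refl Ty.omega)
  | arr h₁ h₂ ih₁ ih₂ => exact CF.arr ih₁ ih₂

/-! ### Refinement and merging of expansion trees -/

/-- Tree refinement. -/
inductive Ref : Tr → Tr → Prop
  | leaf (T) : Ref .leaf T
  | cons {c c' r r'} : Ref c c' → Ref r r' → Ref (.cons c r) (.cons c' r')

lemma ref_refl : ∀ T, Ref T T
  | .leaf => Ref.leaf _
  | .cons c r => Ref.cons (ref_refl c) (ref_refl r)

lemma ref_trans : ∀ {a b c : Tr}, Ref a b → Ref b c → Ref a c := by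
  intro a b c hab
  induction hab generalizing c with
  | leaf T => intro _; exact Ref.leaf c
  | cons h₁ h₂ ih₁ ih₂ =>
      intro hbc
      cases hbc with
      | cons g₁ g₂ => exact Ref.cons (ih₁ g₁) (ih₂ g₂)

/-- Merging two expansion trees. -/
def merge : Tr → Tr → Tr
  | .leaf, T => T
  | .cons c r, .leaf => .cons c r
  | .cons c r, .cons c' r' => .cons (merge c c') (merge r r')

lemma ref_merge_left : ∀ T U, Ref T (merge T U)
  | .leaf, U => Ref.leaf U
  | .cons c r, .leaf => ref_refl _
  | .cons c r, .cons c' r' => Ref.cons (ref_merge_left c c') (ref_merge_left r r')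

lemma ref_merge_right : ∀ T U, Ref U (merge T U)
  | .leaf, U => ref_refl U
  | .cons _ _, .leaf => Ref.leaf _
  | .cons c r, .cons c' r' => Ref.cons (ref_merge_right c c') (ref_merge_right r r')

/-- **Key lemma**: every `CF`-inequality is realised by all refinements of some tree. -/
theorem key : ∀ {σ τ : Ty}, CF σ τ →
    ∃ T : Tr, ∀ T', Ref T T' → ∀ (Γ : Env) (M : Term) (n : ℕ),
      Deriv Γ M σ → DomOK Γ n (tw T') → Deriv Γ (texpand T' M n) τ := by
  intro σ τ h
  induction h with
  | refl σ => exact ⟨.leaf, fun T' _ Γ M n hM hd => master σ T' Γ M n hM hd⟩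
  | omegaR σ =>
      exact ⟨.leaf, fun T' _ Γ M n hM hd => master Ty.omega T' Γ M n (derOmega hM) hd⟩
  | andL₁ τ h ih =>
      obtain ⟨T, hT⟩ := ih
      exact ⟨T, fun T' hr Γ M n hM hd => hT T' hr Γ M n (Deriv.andE₁ hM) hd⟩
  | andL₂ σ h ih =>
      obtain ⟨T, hT⟩ := ih
      exact ⟨T, fun T' hr Γ M n hM hd => hT T' hr Γ M n (Deriv.andE₂ hM) hd⟩
  | andR h₁ h₂ ih₁ ih₂ =>
      obtain ⟨T₁, hT₁⟩ := ih₁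
      obtain ⟨T₂, hT₂⟩ := ih₂
      refine ⟨merge T₁ T₂, fun T' hr Γ M n hM hd => ?_⟩
      exact Deriv.andI (hT₁ T' (ref_trans (ref_merge_left T₁ T₂) hr) Γ M n hM hd)
        (hT₂ T' (ref_trans (ref_merge_right T₁ T₂) hr) Γ M n hM hd)
  | orR₁ ρ h ih =>
      obtain ⟨T, hT⟩ := ih
      exact ⟨T, fun T' hr Γ M n hM hd => Deriv.orI₁ (hT T' hr Γ M n hM hd)⟩
  | orR₂ τ h ih =>
      obtain ⟨T, hT⟩ := ih
      exact ⟨T, fun T' hr Γ M n hM hd => Deriv.orI₂ (hT T' hr Γ M n hM hd)⟩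
  | @orL σ τ ρ h₁ h₂ ih₁ ih₂ =>
      obtain ⟨T₁, hT₁⟩ := ih₁
      obtain ⟨T₂, hT₂⟩ := ih₂
      refine ⟨merge T₁ T₂, fun T' hr Γ M n hM hd => ?_⟩
      set z := n + tw T' with hz
      have hdz₁ : DomOK [(z, Ty.and σ Ty.omega)] n (tw T') := by
        intro x hx; simp [Env.dom] at hx; omega
      have hdz₂ : DomOK [(z, Ty.and τ Ty.omega)] n (tw T') := by
        intro x hx; simp [Env.dom] at hx; omega
      have p₁ : Deriv [(z, Ty.and σ Ty.omega)] (texpand T' (Term.var z) n) ρ :=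
        hT₁ T' (ref_trans (ref_merge_left T₁ T₂) hr) _ _ n
          (Deriv.andE₁ (Deriv.ax z (Ty.and σ Ty.omega))) hdz₁
      have p₂ : Deriv [(z, Ty.and τ Ty.omega)] (texpand T' (Term.var z) n) ρ :=
        hT₂ T' (ref_trans (ref_merge_right T₁ T₂) hr) _ _ n
          (Deriv.andE₁ (Deriv.ax z (Ty.and τ Ty.omega))) hdz₂
      have p₃ : Deriv Γ M (Ty.and (Ty.or σ τ) Ty.omega) :=
        Deriv.eqv hM (SemEq.andOmegaR _)
      have hres := Deriv.orE (Γ₁ := []) p₁ p₂ p₃ (envDisj_nil Γ)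
      have hsub : Term.subst (texpand T' (Term.var z) n) z M = texpand T' M n := by
        rw [subst_texpand T' _ n z M (Or.inr (le_of_eq hz.symm))]
        simp [Term.subst]
      rw [hsub] at hres
      simpa using hres
  | @arr σ σ' τ τ' h₁ h₂ ih₁ ih₂ =>
      obtain ⟨T₁, hT₁⟩ := ih₁
      obtain ⟨T₂, hT₂⟩ := ih₂
      refine ⟨.cons T₁ T₂, fun T' hr Γ M n hM hd => ?_⟩
      cases hr with
      | @cons _ c _ r hc hrr =>
        have hd' : DomOK [(n, σ')] (n + 1) (tw c) := by
          intro x hx; simp [Env.dom] at hx; omega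
        have hEc : Deriv [(n, σ')] (texpand c (Term.var n) (n + 1)) σ :=
          hT₁ c hc _ _ (n + 1) (Deriv.ax n σ') hd'
        have hdisj : EnvDisj Γ [(n, σ')] := by
          refine envDisj_single _ fun x hx => ?_
          have := hd x hx; simp [tw] at this; omega
        have happ := Deriv.perm (Deriv.arrE hM hEc hdisj) perm_snoc
        have hdr : DomOK ((n, σ') :: Γ) (n + 1 + tw c) (tw r) := by
          intro x hx
          rw [dom_cons] at hx
          simp at hx
          rcases hx with rfl | hx
          · omega
          · have := hd x hx; simp [tw] at this; omega
        have hr' := hT₂ r hrr _ _ (n + 1 + tw c) happ hdr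
        exact Deriv.arrI hr'
  | @atomArrR a τ σ h ih =>
      obtain ⟨T₂, hT₂⟩ := ih
      refine ⟨.cons .leaf T₂, fun T' hr Γ M n hM hd => ?_⟩
      cases hr with
      | @cons _ c _ r hc hrr =>
        have hd' : DomOK [(n, σ)] (n + 1) (tw c) := by
          intro x hx; simp [Env.dom] at hx; omega
        have hEc : Deriv [(n, σ)] (texpand c (Term.var n) (n + 1)) Ty.omega :=
          master Ty.omega c _ _ (n + 1) (derOmega (Deriv.ax n σ)) hd'
        have hMarr : Deriv Γ M (Ty.arr Ty.omega (Ty.atom a)) := Deriv.eqv hM (SemEq.atomFun a)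
        have hdisj : EnvDisj Γ [(n, σ)] := by
          refine envDisj_single _ fun x hx => ?_
          have := hd x hx; simp [tw] at this; omega
        have happ := Deriv.perm (Deriv.arrE hMarr hEc hdisj) perm_snoc
        have hdr : DomOK ((n, σ) :: Γ) (n + 1 + tw c) (tw r) := by
          intro x hx
          rw [dom_cons] at hx
          simp at hx
          rcases hx with rfl | hx
          · omega
          · have := hd x hx; simp [tw] at this; omega
        have hr' := hT₂ r hrr _ _ (n + 1 + tw c) happ hdr
        exact Deriv.arrI hr'
  | @arrOmegaR τ σ σ' h ih =>
      obtain ⟨T₂, hT₂⟩ := ih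
      refine ⟨.cons .leaf T₂, fun T' hr Γ M n hM hd => ?_⟩
      cases hr with
      | @cons _ c _ r hc hrr =>
        have hd' : DomOK [(n, σ')] (n + 1) (tw c) := by
          intro x hx; simp [Env.dom] at hx; omega
        have hEc : Deriv [(n, σ')] (texpand c (Term.var n) (n + 1)) Ty.omega :=
          master Ty.omega c _ _ (n + 1) (derOmega (Deriv.ax n σ')) hd'
        have hMarr : Deriv Γ M (Ty.arr Ty.omega Ty.omega) :=
          Deriv.eqv (derOmega hM) SemEq.omegaFun
        have hdisj : EnvDisj Γ [(n, σ')] := by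
          refine envDisj_single _ fun x hx => ?_
          have := hd x hx; simp [tw] at this; omega
        have happ := Deriv.perm (Deriv.arrE hMarr hEc hdisj) perm_snoc
        have hdr : DomOK ((n, σ') :: Γ) (n + 1 + tw c) (tw r) := by
          intro x hx
          rw [dom_cons] at hx
          simp at hx
          rcases hx with rfl | hx
          · omega
          · have := hd x hx; simp [tw] at this; omega
        have hr' := hT₂ r hrr _ _ (n + 1 + tw c) happ hdr
        exact Deriv.arrI hr'

/-! ### Canonical expansions are finite hereditary identities -/

def ysOf : Tr → ℕ → List ℕ
  | .leaf, _ => []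
  | .cons c r, n => n :: ysOf r (n + 1 + tw c)

def argsOf : Tr → ℕ → List Term
  | .leaf, _ => []
  | .cons c r, n => texpand c (Term.var n) (n + 1) :: argsOf r (n + 1 + tw c)

lemma texpand_eq (T : Tr) : ∀ (M : Term) (n : ℕ),
    texpand T M n = lamList (ysOf T n) (appList M (argsOf T n)) := by
  induction T with
  | leaf => intro M n; rfl
  | cons c r ihc ihr =>
      intro M n
      simp only [texpand, ysOf, argsOf, lamList, appList]
      rw [ihr]
      rfl

lemma ysOf_mem {T : Tr} : ∀ {n y : ℕ}, y ∈ ysOf T n → n ≤ y ∧ y < n + tw T := by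
  induction T with
  | leaf => intro n y h; simp [ysOf] at h
  | cons c r ihr' ihr =>
      intro n y h
      simp only [ysOf, List.mem_cons] at h
      rcases h with rfl | h
      · simp only [tw]; omega
      · have := ihr h
        simp only [tw] at this ⊢; omega

lemma ysOf_nodup : ∀ (T : Tr) (n : ℕ), (ysOf T n).Nodup := by
  intro T
  induction T with
  | leaf => intro n; simp [ysOf]
  | cons c r ihc ihr =>
      intro n
      simp only [ysOf, List.nodup_cons]
      refine ⟨fun h => ?_, ihr _⟩
      have := ysOf_mem h
      omega

lemma argsOf_length (T : Tr) : ∀ n, (argsOf T n).length = (ysOf T n).length := by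
  induction T with
  | leaf => intro n; rfl
  | cons c r ihc ihr => intro n; simp [argsOf, ysOf, ihr]

lemma bconv_appL {M M' : Term} (N : Term) (h : BetaConv M M') :
    BetaConv (Term.app M N) (Term.app M' N) := by
  induction h with
  | rel x y hxy => exact EqvGen.rel _ _ (Beta.appL N hxy)
  | refl x => exact EqvGen.refl _
  | symm x y _ ih => exact EqvGen.symm _ _ ih
  | trans x y z _ _ ih₁ ih₂ => exact EqvGen.trans _ _ _ ih₁ ih₂

lemma bconv_appR (M : Term) {N N' : Term} (h : BetaConv N N') :
    BetaConv (Term.app M N) (Term.app M N') := by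
  induction h with
  | rel x y hxy => exact EqvGen.rel _ _ (Beta.appR M hxy)
  | refl x => exact EqvGen.refl _
  | symm x y _ ih => exact EqvGen.symm _ _ ih
  | trans x y z _ _ ih₁ ih₂ => exact EqvGen.trans _ _ _ ih₁ ih₂

lemma bconv_lam (x : ℕ) {M M' : Term} (h : BetaConv M M') :
    BetaConv (Term.lam x M) (Term.lam x M') := by
  induction h with
  | rel a b hab => exact EqvGen.rel _ _ (Beta.lam x hab)
  | refl a => exact EqvGen.refl _
  | symm a b _ ih => exact EqvGen.symm _ _ ih
  | trans a b c _ _ ih₁ ih₂ => exact EqvGen.trans _ _ _ ih₁ ih₂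

lemma bconv_lamList (ys : List ℕ) {M M' : Term} (h : BetaConv M M') :
    BetaConv (lamList ys M) (lamList ys M') := by
  induction ys with
  | nil => exact h
  | cons y ys ih => exact bconv_lam y ih

lemma bconv_appList : ∀ {l l' : List Term}, List.Forall₂ BetaConv l l' →
    ∀ {M M' : Term}, BetaConv M M' → BetaConv (appList M l) (appList M' l') := by
  intro l l' h
  induction h with
  | nil => intro M M' hM; exact hM
  | cons ha hl ih =>
      intro M M' hM
      exact ih (EqvGen.trans _ _ _ (bconv_appL _ hM) (bconv_appR _ ha))

/-- Inner packaging: each argument of the spine is β-convertible to `Idᵢ yᵢ`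
for some β-normal FHI `Idᵢ`. -/
theorem fhiAux : ∀ (T : Tr) (n : ℕ), ∃ Ids : List Term,
    Ids.length = (ysOf T n).length ∧ (∀ I ∈ Ids, FHInf I) ∧
    List.Forall₂ BetaConv (argsOf T n)
      (List.zipWith (fun I y => Term.app I (Term.var y)) Ids (ysOf T n)) := by
  intro T
  induction T with
  | leaf => intro n; exact ⟨[], rfl, by simp, by simp [argsOf, ysOf]⟩
  | cons c r ihc ihr =>
      intro n
      -- package the FHI for the first child `c`
      obtain ⟨Idsc, hlenc, hfhc, hf2c⟩ := ihc (n + 1)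
      -- build the β-normal FHI term for `c` with head variable 0
      have hofc : (List.ofFn fun i : Fin (ysOf c (n + 1)).length =>
          Term.app (Idsc.get (Fin.cast hlenc.symm i)) (Term.var ((ysOf c (n + 1)).get i)))
          = List.zipWith (fun I y => Term.app I (Term.var y)) Idsc (ysOf c (n + 1)) := by
        apply List.ext_getElem
        · simp [hlenc]
        · intro i h1 h2
          simp [List.getElem_ofFn, List.getElem_zipWith, List.get_eq_getElem]
      have hx0 : 0 ∉ ysOf c (n + 1) := by
        intro hmem
        have := ysOf_mem hmem
        omega
      have hNc : FHInf (Term.lam 0 (lamList (ysOf c (n + 1)) (appList (Term.var 0)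
          (List.zipWith (fun I y => Term.app I (Term.var y)) Idsc (ysOf c (n + 1)))))) := by
        have := FHInf.mk 0 (ysOf c (n + 1)) Idsc hlenc hx0 (ysOf_nodup c (n + 1)) hfhc
        rwa [hofc] at this
      set Nc := Term.lam 0 (lamList (ysOf c (n + 1)) (appList (Term.var 0)
          (List.zipWith (fun I y => Term.app I (Term.var y)) Idsc (ysOf c (n + 1))))) with hNcdef
      have hbc : BetaConv (Term.lam 0 (texpand c (Term.var 0) (n + 1))) Nc := by
        rw [texpand_eq]
        exact bconv_lam 0 (bconv_lamList _ (bconv_appList hf2c (EqvGen.refl _)))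
      obtain ⟨Idsr, hlenr, hfhr, hf2r⟩ := ihr (n + 1 + tw c)
      refine ⟨Nc :: Idsr, by simp [ysOf, hlenr], ?_, ?_⟩
      · intro I hI
        rcases List.mem_cons.mp hI with rfl | hI
        · exact hNc
        · exact hfhr I hI
      · simp only [argsOf, ysOf, List.zipWith]
        refine List.Forall₂.cons ?_ hf2r
        -- BetaConv (texpand c (var n) (n+1)) (app Nc (var n))
        have hstep : Beta (Term.app (Term.lam 0 (texpand c (Term.var 0) (n + 1))) (Term.var n))
            (Term.subst (texpand c (Term.var 0) (n + 1)) 0 (Term.var n)) :=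
          Beta.beta 0 _ (Term.var n)
        have hsub : Term.subst (texpand c (Term.var 0) (n + 1)) 0 (Term.var n)
            = texpand c (Term.var n) (n + 1) := by
          rw [subst_texpand c _ (n + 1) 0 (Term.var n) (Or.inl (by omega))]
          simp [Term.subst]
        rw [hsub] at hstep
        exact EqvGen.trans _ _ _ (EqvGen.symm _ _ (EqvGen.rel _ _ hstep))
          (bconv_appL (Term.var n) hbc)

/-- Abstracting the head of a canonical expansion yields an FHI. -/
theorem fhiOf (T : Tr) (h n : ℕ) (hhn : h < n) :
    ∃ N, FHInf N ∧ BetaConv (Term.lam h (texpand T (Term.var h) n)) N := by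
  obtain ⟨Ids, hlen, hfh, hf2⟩ := fhiAux T n
  have hof : (List.ofFn fun i : Fin (ysOf T n).length =>
      Term.app (Ids.get (Fin.cast hlen.symm i)) (Term.var ((ysOf T n).get i)))
      = List.zipWith (fun I y => Term.app I (Term.var y)) Ids (ysOf T n) := by
    apply List.ext_getElem
    · simp [hlen]
    · intro i h1 h2
      simp [List.getElem_ofFn, List.getElem_zipWith, List.get_eq_getElem]
  have hx : h ∉ ysOf T n := by
    intro hmem
    have := ysOf_mem hmem
    omega
  refine ⟨Term.lam h (lamList (ysOf T n) (appList (Term.var h)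
      (List.zipWith (fun I y => Term.app I (Term.var y)) Ids (ysOf T n)))), ?_, ?_⟩
  · have := FHInf.mk h (ysOf T n) Ids hlen hx (ysOf_nodup T n) hfh
    rwa [hof] at this
  · rw [texpand_eq]
    exact bconv_lam h (bconv_lamList _ (bconv_appList hf2 (EqvGen.refl _)))

end AuxFHI

/-- If `σ ≤ τ` in the normalisation pre-order, then some FHI has type `σ → τ`. -/
theorem normLe_fhi_typed :
    ∀ σ τ : Ty, NormLe σ τ → ∃ Id, FHI Id ∧ Deriv [] Id (Ty.arr σ τ) := by
  intro σ τ h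
  obtain ⟨T, hT⟩ := AuxFHI.key (AuxFHI.normle_cf h)
  refine ⟨Term.lam 0 (AuxFHI.texpand T (Term.var 0) 1), ?_, ?_⟩
  · obtain ⟨N, hN, hbc⟩ := AuxFHI.fhiOf T 0 1 Nat.one_pos
    exact ⟨N, hbc, hN⟩
  · refine Deriv.arrI (hT T (AuxFHI.ref_refl T) [(0, σ)] (Term.var 0) 1 (Deriv.ax 0 σ) ?_)
    intro x hx
    simp [Env.dom] at hx
    omega

end TypeIso
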